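/- arXiv:1906.10789 — 3 statements merged into one kernel-verified Lean document; each statement's English description precedes it below -/
import Mathlib

section
/- Let k be a commutative ring, R a commutative k-algebra, and L a Lie algebra over k that is also an R-module. Suppose ρ : L → Derivation k R R is a map satisfying the Leibniz-type (Lie algebroid anchor) identity ⁅x, f • y⁆ = f • ⁅x, y⁆ + (ρ x f) • y for all x, y ∈ L and f ∈ R, and suppose the R-module L is faithful in the sense that whenever r ∈ R satisfies r • y = 0 for all y ∈ L, then r = 0. Then ρ is a Lie algebra homomorphism into the derivations: for all x, z ∈ L, ρ ⁅x, z⁆ = ⁅ρ x, ρ z⁆, where the bracket of derivations is the commutator (ρ⁅x,z⁆) f = (ρ x)((ρ z) f) − (ρ z)((ρ x) f). -/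
/-- If `ρ : L → Derivation k R R` satisfies the Lie algebroid anchor
(Leibniz) identity and the `R`-module `L` is faithful, then `ρ` is a Lie algebra
homomorphism into derivations with the commutator bracket. -/
theorem anchor_is_lie_hom {k R L : Type*} [CommRing k] [CommRing R] [Algebra k R]
    [LieRing L] [LieAlgebra k L] [Module R L]
    (ρ : L → Derivation k R R)
    (anchor : ∀ (x y : L) (f : R), ⁅x, f • y⁆ = f • ⁅x, y⁆ + (ρ x f) • y)
    (faithful : ∀ r : R, (∀ y : L, r • y = 0) → r = 0) :
    ∀ (x z : L) (f : R), ρ ⁅x, z⁆ f = ρ x (ρ z f) - ρ z (ρ x f) := by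
  intro x z f
  have key : ρ ⁅x, z⁆ f - (ρ x (ρ z f) - ρ z (ρ x f)) = 0 := by
    apply faithful
    intro y
    have h1 : ⁅x, ⁅z, f • y⁆⁆
        = f • ⁅x, ⁅z, y⁆⁆ + (ρ x f) • ⁅z, y⁆ + ((ρ z f) • ⁅x, y⁆ + (ρ x (ρ z f)) • y) := by
      rw [anchor z y f, lie_add, anchor, anchor]
    have h2 : ⁅z, ⁅x, f • y⁆⁆
        = f • ⁅z, ⁅x, y⁆⁆ + (ρ z f) • ⁅x, y⁆ + ((ρ x f) • ⁅z, y⁆ + (ρ z (ρ x f)) • y) := by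
      rw [anchor x y f, lie_add, anchor, anchor]
    have h3 : ⁅⁅x, z⁆, f • y⁆ = f • ⁅⁅x, z⁆, y⁆ + (ρ ⁅x, z⁆ f) • y := anchor _ _ _
    have h4 : ⁅⁅x, z⁆, f • y⁆ = ⁅x, ⁅z, f • y⁆⁆ - ⁅z, ⁅x, f • y⁆⁆ := by
      rw [lie_lie]
    have h5 : ⁅⁅x, z⁆, y⁆ = ⁅x, ⁅z, y⁆⁆ - ⁅z, ⁅x, y⁆⁆ := by
      rw [lie_lie]
    rw [h3, h5] at h4
    rw [h1, h2] at h4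
    rw [sub_smul, sub_smul]
    linear_combination (norm := module) h4
  linear_combination key
end

section
/- Let p, r ∈ ℕ, let c : Fin r → Fin r → Fin r → ℝ be Lie structure constants (skew-symmetric and satisfying the structure-constant Jacobi identity), and let Φ : (Fin p → ℝ) → Matrix (Fin p) (Fin r) ℝ be a smooth matrix of infinitesimals compatible with c, i.e. for all i, j ∈ Fin r, m ∈ Fin p and z: Σ_{l ∈ Fin p} (Φ(z) l i * ∂_l Φ_{m j}(z) − Φ(z) l j * ∂_l Φ_{m i}(z)) = − Σ_{k ∈ Fin r} c i j k * Φ(z) m k. For smooth maps x, y : (Fin p → ℝ) → (Fin r → ℝ), define the second bracket componentwise by ⟦x, y⟧(z) k = Σ_{j ∈ Fin r} Σ_{l ∈ Fin p} x(z) j * Φ(z) l j * ∂_l y_k(z) − Σ_{j ∈ Fin r} Σ_{l ∈ Fin p} y(z) j * Φ(z) l j * ∂_l x_k(z) − Σ_{i, j ∈ Fin r} c i j k * x(z) i * y(z) j. Then ⟦·,·⟧ satisfies the Jacobi identity: for all smooth x, y, w and all z, ⟦x, ⟦y, w⟧⟧(z) + ⟦y, ⟦w, x⟧⟧(z) + ⟦w,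 ⟦x, y⟧⟧(z) = 0. -/
open Matrix

/-- Directional (partial) derivative of `f` at `z` in the `l`-th coordinate direction. -/
noncomputable def pd {p : ℕ} (l : Fin p) (f : (Fin p → ℝ) → ℝ) (z : Fin p → ℝ) : ℝ :=
  fderiv ℝ f z (Pi.single l 1)

/-- The second Lie bracket on maps `M → 𝔤`, written in coordinates: structure constants `c`
of `𝔤` and a matrix of infinitesimals `Φ` of a Lie group action. -/
noncomputable def secondBracket {p r : ℕ} (c : Fin r → Fin r → Fin r → ℝ)
    (Φ : (Fin p → ℝ) → Matrix (Fin p) (Fin r) ℝ)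
    (x y : (Fin p → ℝ) → (Fin r → ℝ)) : (Fin p → ℝ) → (Fin r → ℝ) :=
  fun z k =>
    (∑ j, ∑ l, x z j * Φ z l j * pd l (fun w => y w k) z)
    - (∑ j, ∑ l, y z j * Φ z l j * pd l (fun w => x w k) z)
    - ∑ i, ∑ j, c i j k * x z i * y z j

/-! ### Calculus helper lemmas for `pd` -/

section PdCalculus

variable {p : ℕ} {z : Fin p → ℝ}

lemma pd_smooth {f : (Fin p → ℝ) → ℝ} (hf : ContDiff ℝ (⊤ : ℕ∞) f) (l : Fin p) :
    ContDiff ℝ (⊤ : ℕ∞) (fun z => pd l f z) := by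
  have h1 : ContDiff ℝ (⊤ : ℕ∞) (fun z => fderiv ℝ f z) := hf.fderiv_right (by simp)
  exact h1.clm_apply contDiff_const

lemma pd_symm {f : (Fin p → ℝ) → ℝ} (hf : ContDiff ℝ (⊤ : ℕ∞) f) (l m : Fin p) (z : Fin p → ℝ) :
    pd l (fun z => pd m f z) z = pd m (fun z => pd l f z) z := by
  have hsymm : IsSymmSndFDerivAt ℝ f z := hf.contDiffAt.isSymmSndFDerivAt (by rw [minSmoothness_of_isRCLikeNormedField]; exact WithTop.coe_le_coe.mpr le_top)
  have hd : DifferentiableAt ℝ (fun z => fderiv ℝ f z) z :=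
    ((show ContDiff ℝ (⊤ : ℕ∞) (fun z => fderiv ℝ f z) from hf.fderiv_right (by simp)).differentiable (by simp) z)
  have key : ∀ u v : Fin p → ℝ,
      fderiv ℝ (fun z => fderiv ℝ f z v) z u = fderiv ℝ (fderiv ℝ f) z u v := by
    intro u v
    rw [fderiv_clm_apply hd (differentiableAt_const v)]
    simp
  unfold pd
  rw [key, key, hsymm]

lemma pd_sub {f g : (Fin p → ℝ) → ℝ} (hf : DifferentiableAt ℝ f z) (hg : DifferentiableAt ℝ g z)
    (l : Fin p) : pd l (fun z => f z - g z) z = pd l f z - pd l g z := by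
  unfold pd; rw [fderiv_fun_sub hf hg]; simp

lemma pd_sum {n : ℕ} {f : Fin n → (Fin p → ℝ) → ℝ}
    (hf : ∀ i, DifferentiableAt ℝ (f i) z) (l : Fin p) :
    pd l (fun z => ∑ i, f i z) z = ∑ i, pd l (f i) z := by
  unfold pd; rw [fderiv_fun_sum (fun i _ => hf i)]; simp

lemma pd_mul {f g : (Fin p → ℝ) → ℝ} (hf : DifferentiableAt ℝ f z)
    (hg : DifferentiableAt ℝ g z) (l : Fin p) :
    pd l (fun z => f z * g z) z = pd l f z * g z + f z * pd l g z := by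
  unfold pd; rw [fderiv_fun_mul hf hg]; simp; ring

lemma pd_mul3 {f g h : (Fin p → ℝ) → ℝ} (hf : DifferentiableAt ℝ f z)
    (hg : DifferentiableAt ℝ g z) (hh : DifferentiableAt ℝ h z) (l : Fin p) :
    pd l (fun z => f z * g z * h z) z
      = pd l f z * g z * h z + f z * pd l g z * h z + f z * g z * pd l h z := by
  rw [pd_mul (f := fun z => f z * g z) (hf.mul hg) hh, pd_mul hf hg]; ring

lemma pd_const_mul3 {g h : (Fin p → ℝ) → ℝ} (a : ℝ)
    (hg : DifferentiableAt ℝ g z) (hh : DifferentiableAt ℝ h z) (l : Fin p) :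
    pd l (fun z => a * g z * h z) z = a * pd l g z * h z + a * g z * pd l h z := by
  rw [pd_mul3 (differentiableAt_const a) hg hh]
  simp [pd, fderiv_const]

end PdCalculus

/-! ### Sum-permutation machinery -/

section SumPerm

variable {α β γ δ α' β' γ' δ' : Type*} [Fintype α] [Fintype β] [Fintype γ] [Fintype δ]
  [Fintype α'] [Fintype β'] [Fintype γ'] [Fintype δ']

lemma sum4_perm (g : α → β → γ → δ → ℝ) (h : α' → β' → γ' → δ' → ℝ)
    (e : α × β × γ × δ ≃ α' × β' × γ' × δ')
    (he : ∀ i m a l, h (e (i,m,a,l)).1 (e (i,m,a,l)).2.1 (e (i,m,a,l)).2.2.1 (e (i,m,a,l)).2.2.2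
        = g i m a l) :
    ∑ i, ∑ m, ∑ a, ∑ l, g i m a l = ∑ i', ∑ m', ∑ a', ∑ l', h i' m' a' l' :=
  calc ∑ i, ∑ m, ∑ a, ∑ l, g i m a l
      = ∑ x : α × β × γ × δ, g x.1 x.2.1 x.2.2.1 x.2.2.2 := by
        simp only [Fintype.sum_prod_type]
    _ = ∑ x : α' × β' × γ' × δ', h x.1 x.2.1 x.2.2.1 x.2.2.2 := by
        refine Fintype.sum_equiv e _ _ ?_
        rintro ⟨i, m, a, l⟩
        exact (he i m a l).symm
    _ = ∑ i', ∑ m', ∑ a', ∑ l', h i' m' a' l' := by simp only [Fintype.sum_prod_type]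

end SumPerm

/-! ### Pointwise (algebraic) data and the core computation -/

namespace SBKey

variable {p r : ℕ}

/-- Pointwise value of the second bracket. -/
def Bf (c : Fin r → Fin r → Fin r → ℝ) (F : Fin p → Fin r → ℝ)
    (U V : Fin r → ℝ) (DU DV : Fin p → Fin r → ℝ) : Fin r → ℝ :=
  fun j => (∑ a, ∑ l, U a * F l a * DV l j) - (∑ a, ∑ l, V a * F l a * DU l j)
    - ∑ a, ∑ b, c a b j * U a * V b

/-- Pointwise value of the derivative of the `k`-th component of the second bracket. -/
def DBf (c : Fin r → Fin r → Fin r → ℝ) (F : Fin p → Fin r → ℝ)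
    (DF : Fin p → Fin p → Fin r → ℝ) (k : Fin r)
    (U V : Fin r → ℝ) (DU DV : Fin p → Fin r → ℝ) (DDU DDV : Fin p → Fin p → ℝ) :
    Fin p → ℝ :=
  fun m =>
    (∑ a, ∑ l, (DU m a * F l a * DV l k + U a * DF m l a * DV l k + U a * F l a * DDV m l))
    - (∑ a, ∑ l, (DV m a * F l a * DU l k + V a * DF m l a * DU l k + V a * F l a * DDU m l))
    - ∑ a, ∑ b, (c a b k * DU m a * V b + c a b k * U a * DV m b)

/-! Primitive sums. -/

def S1 (F : Fin p → Fin r → ℝ) (k : Fin r) (U : Fin r → ℝ) (DV DS : Fin p → Fin r → ℝ) : ℝ :=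
  ∑ i, ∑ m, ∑ a, ∑ l, U i * F m i * (DV m a * F l a * DS l k)

def S2 (F : Fin p → Fin r → ℝ) (DF : Fin p → Fin p → Fin r → ℝ) (k : Fin r)
    (U V : Fin r → ℝ) (DS : Fin p → Fin r → ℝ) : ℝ :=
  ∑ i, ∑ m, ∑ a, ∑ l, U i * F m i * (V a * DF m l a * DS l k)

def S3 (F : Fin p → Fin r → ℝ) (U V : Fin r → ℝ) (DDS : Fin p → Fin p → ℝ) : ℝ :=
  ∑ i, ∑ m, ∑ a, ∑ l, U i * F m i * (V a * F l a * DDS m l)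

def S4 (c : Fin r → Fin r → Fin r → ℝ) (F : Fin p → Fin r → ℝ) (k : Fin r)
    (U : Fin r → ℝ) (DV : Fin p → Fin r → ℝ) (S : Fin r → ℝ) : ℝ :=
  ∑ i, ∑ m, ∑ a, ∑ b, U i * F m i * (c a b k * DV m a * S b)

def S5 (c : Fin r → Fin r → Fin r → ℝ) (F : Fin p → Fin r → ℝ) (k : Fin r)
    (U V : Fin r → ℝ) (DS : Fin p → Fin r → ℝ) : ℝ :=
  ∑ i, ∑ m, ∑ a, ∑ b, U i * F m i * (c a b k * V a * DS m b)

def S6 (F : Fin p → Fin r → ℝ) (k : Fin r) (V : Fin r → ℝ)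
    (DS DU : Fin p → Fin r → ℝ) : ℝ :=
  ∑ j, ∑ m, ∑ a, ∑ l, V a * F l a * DS l j * F m j * DU m k

def S7 (c : Fin r → Fin r → Fin r → ℝ) (F : Fin p → Fin r → ℝ) (k : Fin r)
    (V S : Fin r → ℝ) (DU : Fin p → Fin r → ℝ) : ℝ :=
  ∑ j, ∑ m, ∑ a, ∑ b, c a b j * V a * S b * F m j * DU m k

def S8 (c : Fin r → Fin r → Fin r → ℝ) (F : Fin p → Fin r → ℝ) (k : Fin r)
    (U V : Fin r → ℝ) (DS : Fin p → Fin r → ℝ) : ℝ :=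
  ∑ i, ∑ j, ∑ a, ∑ l, c i j k * U i * (V a * F l a * DS l j)

def S9 (c : Fin r → Fin r → Fin r → ℝ) (k : Fin r) (U V S : Fin r → ℝ) : ℝ :=
  ∑ i, ∑ j, ∑ a, ∑ b, c i j k * U i * (c a b j * V a * S b)

variable (c : Fin r → Fin r → Fin r → ℝ) (F : Fin p → Fin r → ℝ)
  (DF : Fin p → Fin p → Fin r → ℝ) (k : Fin r)

lemma expandT (U V S : Fin r → ℝ) (DU DV DS : Fin p → Fin r → ℝ)
    (DDV DDS : Fin p → Fin p → ℝ) :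
    (∑ j, ∑ l, U j * F l j * DBf c F DF k V S DV DS DDV DDS l)
      - (∑ j, ∑ l, Bf c F V S DV DS j * F l j * DU l k)
      - ∑ i, ∑ j, c i j k * U i * Bf c F V S DV DS j
    = S1 F k U DV DS + S2 F DF k U V DS + S3 F U V DDS
      - S1 F k U DS DV - S2 F DF k U S DV - S3 F U S DDV
      - S4 c F k U DV S - S5 c F k U V DS
      - S6 F k V DS DU + S6 F k S DV DU + S7 c F k V S DU
      - S8 c F k U V DS + S8 c F k U S DV + S9 c k U V S := by
  simp only [Bf, DBf, S1, S2, S3, S4, S5, S6, S7, S8, S9, mul_sub, mul_add, sub_mul,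
    Finset.mul_sum, Finset.sum_mul, Finset.sum_add_distrib, Finset.sum_sub_distrib]
  ring

lemma S1_eq_S6 (U : Fin r → ℝ) (DV DS : Fin p → Fin r → ℝ) :
    S1 F k U DV DS = S6 F k U DV DS :=
  sum4_perm _ _ ⟨fun ⟨i,m,a,l⟩ => (a,l,i,m), fun ⟨a,l,i,m⟩ => (i,m,a,l),
    fun ⟨_,_,_,_⟩ => rfl, fun ⟨_,_,_,_⟩ => rfl⟩
    (fun i m a l => by simp only [Equiv.coe_fn_mk]; try ring)

lemma S3_symm (U V : Fin r → ℝ) (DD : Fin p → Fin p → ℝ) (hDD : ∀ m l, DD m l = DD l m) :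
    S3 F U V DD = S3 F V U DD :=
  sum4_perm _ _ ⟨fun ⟨i,m,a,l⟩ => (a,l,i,m), fun ⟨a,l,i,m⟩ => (i,m,a,l),
    fun ⟨_,_,_,_⟩ => rfl, fun ⟨_,_,_,_⟩ => rfl⟩
    (fun i m a l => by simp only [Equiv.coe_fn_mk]; try rw [hDD l m]; try ring)

lemma S5_eq_S8 (U V : Fin r → ℝ) (DS : Fin p → Fin r → ℝ) :
    S5 c F k U V DS = S8 c F k V U DS :=
  sum4_perm _ _ ⟨fun ⟨i,m,a,b⟩ => (a,b,i,m), fun ⟨a,b,i,m⟩ => (i,m,a,b),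
    fun ⟨_,_,_,_⟩ => rfl, fun ⟨_,_,_,_⟩ => rfl⟩
    (fun i m a b => by simp only [Equiv.coe_fn_mk]; try ring)

lemma S4_eq_neg_S8 (hskew : ∀ i j k, c j i k = -(c i j k))
    (U : Fin r → ℝ) (DV : Fin p → Fin r → ℝ) (S : Fin r → ℝ) :
    S4 c F k U DV S = -(S8 c F k S U DV) := by
  have h : S4 c F k U DV S
      = ∑ i, ∑ j, ∑ a, ∑ l, -(c i j k * S i * (U a * F l a * DV l j)) :=
    sum4_perm _ _ ⟨fun ⟨i,m,a,b⟩ => (b,a,i,m), fun ⟨b,a,i,m⟩ => (i,m,a,b),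
      fun ⟨_,_,_,_⟩ => rfl, fun ⟨_,_,_,_⟩ => rfl⟩
      (fun i m a b => by simp only [Equiv.coe_fn_mk]; rw [hskew a b k]; ring)
  rw [h, S8]
  simp only [Finset.sum_neg_distrib]

lemma S2S7 (compat : ∀ i j m, ∑ l, (F l i * DF l m j - F l j * DF l m i) = -∑ b, c i j b * F m b)
    (U V : Fin r → ℝ) (DS : Fin p → Fin r → ℝ) :
    S2 F DF k U V DS - S2 F DF k V U DS + S7 c F k U V DS = 0 := by
  have h1 : S2 F DF k U V DS
      = ∑ i, ∑ a, ∑ l, ∑ m, U i * V a * DS l k * (F m i * DF m l a) :=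
    sum4_perm _ _ ⟨fun ⟨i,m,a,l⟩ => (i,a,l,m), fun ⟨i,a,l,m⟩ => (i,m,a,l),
      fun ⟨_,_,_,_⟩ => rfl, fun ⟨_,_,_,_⟩ => rfl⟩
      (fun i m a l => by simp only [Equiv.coe_fn_mk]; try ring)
  have h2 : S2 F DF k V U DS
      = ∑ i, ∑ a, ∑ l, ∑ m, U i * V a * DS l k * (F m a * DF m l i) :=
    sum4_perm _ _ ⟨fun ⟨i,m,a,l⟩ => (a,i,l,m), fun ⟨a,i,l,m⟩ => (i,m,a,l),
      fun ⟨_,_,_,_⟩ => rfl, fun ⟨_,_,_,_⟩ => rfl⟩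
      (fun i m a l => by simp only [Equiv.coe_fn_mk]; try ring)
  have h3 : S7 c F k U V DS
      = ∑ i, ∑ a, ∑ l, ∑ b, U i * V a * DS l k * (c i a b * F l b) :=
    sum4_perm _ _ ⟨fun ⟨j,m,a,b⟩ => (a,b,m,j), fun ⟨a,b,m,j⟩ => (j,m,a,b),
      fun ⟨_,_,_,_⟩ => rfl, fun ⟨_,_,_,_⟩ => rfl⟩
      (fun j m a b => by simp only [Equiv.coe_fn_mk]; try ring)
  rw [h1, h2, h3]
  rw [← Finset.sum_sub_distrib, ← Finset.sum_add_distrib]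
  refine Finset.sum_eq_zero fun i _ => ?_
  rw [← Finset.sum_sub_distrib, ← Finset.sum_add_distrib]
  refine Finset.sum_eq_zero fun a _ => ?_
  rw [← Finset.sum_sub_distrib, ← Finset.sum_add_distrib]
  refine Finset.sum_eq_zero fun l _ => ?_
  have hc : ∑ m, (F m i * DF m l a - F m a * DF m l i) = -∑ b, c i a b * F l b := compat i a l
  have e1 : ∑ m, U i * V a * DS l k * (F m i * DF m l a)
      - ∑ m, U i * V a * DS l k * (F m a * DF m l i)
      = U i * V a * DS l k * ∑ m, (F m i * DF m l a - F m a * DF m l i) := by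
    rw [Finset.mul_sum, ← Finset.sum_sub_distrib]
    exact Finset.sum_congr rfl fun m _ => by ring
  have e2 : ∑ b, U i * V a * DS l k * (c i a b * F l b)
      = U i * V a * DS l k * ∑ b, c i a b * F l b := by
    rw [Finset.mul_sum]
  rw [e1, e2, hc]
  ring

lemma S9cyc (hskew : ∀ i j k, c j i k = -(c i j k))
    (hjac : ∀ i j l m, ∑ k, (c i j k * c k l m + c j l k * c k i m + c l i k * c k j m) = 0)
    (X Y W : Fin r → ℝ) :
    S9 c k X Y W + S9 c k Y W X + S9 c k W X Y = 0 := by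
  have A1 : S9 c k X Y W
      = ∑ α, ∑ β, ∑ γ, ∑ j, c α j k * X α * (c β γ j * Y β * W γ) :=
    sum4_perm _ _ ⟨fun ⟨i,j,a,b⟩ => (i,a,b,j), fun ⟨i,a,b,j⟩ => (i,j,a,b),
      fun ⟨_,_,_,_⟩ => rfl, fun ⟨_,_,_,_⟩ => rfl⟩
      (fun i j a b => by simp only [Equiv.coe_fn_mk]; try ring)
  have A2 : S9 c k Y W X
      = ∑ α, ∑ β, ∑ γ, ∑ j, c β j k * Y β * (c γ α j * W γ * X α) :=
    sum4_perm _ _ ⟨fun ⟨i,j,a,b⟩ => (b,i,a,j), fun ⟨b,i,a,j⟩ => (i,j,a,b),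
      fun ⟨_,_,_,_⟩ => rfl, fun ⟨_,_,_,_⟩ => rfl⟩
      (fun i j a b => by simp only [Equiv.coe_fn_mk]; try ring)
  have A3 : S9 c k W X Y
      = ∑ α, ∑ β, ∑ γ, ∑ j, c γ j k * W γ * (c α β j * X α * Y β) :=
    sum4_perm _ _ ⟨fun ⟨i,j,a,b⟩ => (a,b,i,j), fun ⟨a,b,i,j⟩ => (i,j,a,b),
      fun ⟨_,_,_,_⟩ => rfl, fun ⟨_,_,_,_⟩ => rfl⟩
      (fun i j a b => by simp only [Equiv.coe_fn_mk]; try ring)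
  rw [A1, A2, A3]
  rw [← Finset.sum_add_distrib, ← Finset.sum_add_distrib]
  refine Finset.sum_eq_zero fun α _ => ?_
  rw [← Finset.sum_add_distrib, ← Finset.sum_add_distrib]
  refine Finset.sum_eq_zero fun β _ => ?_
  rw [← Finset.sum_add_distrib, ← Finset.sum_add_distrib]
  refine Finset.sum_eq_zero fun γ _ => ?_
  rw [← Finset.sum_add_distrib, ← Finset.sum_add_distrib]
  have key : ∀ j, c α j k * X α * (c β γ j * Y β * W γ)
      + c β j k * Y β * (c γ α j * W γ * X α)
      + c γ j k * W γ * (c α β j * X α * Y β)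
      = (-(X α * Y β * W γ)) * (c β γ j * c j α k + c γ α j * c j β k + c α β j * c j γ k) := by
    intro j
    rw [hskew j α k, hskew j β k, hskew j γ k]
    ring
  calc ∑ j, (c α j k * X α * (c β γ j * Y β * W γ)
        + c β j k * Y β * (c γ α j * W γ * X α)
        + c γ j k * W γ * (c α β j * X α * Y β))
      = ∑ j, (-(X α * Y β * W γ))
          * (c β γ j * c j α k + c γ α j * c j β k + c α β j * c j γ k) :=
        Finset.sum_congr rfl fun j _ => key j
    _ = (-(X α * Y β * W γ))
          * ∑ j, (c β γ j * c j α k + c γ α j * c j β k + c α β j * c j γ k) :=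
        (Finset.mul_sum _ _ _).symm
    _ = 0 := by rw [hjac β γ α k]; ring

/-- The core algebraic identity. -/
lemma key (hskew : ∀ i j k, c j i k = -(c i j k))
    (hjac : ∀ i j l m, ∑ k, (c i j k * c k l m + c j l k * c k i m + c l i k * c k j m) = 0)
    (compat : ∀ i j m, ∑ l, (F l i * DF l m j - F l j * DF l m i) = -∑ b, c i j b * F m b)
    (X Y W : Fin r → ℝ) (DX DY DW : Fin p → Fin r → ℝ) (DDX DDY DDW : Fin p → Fin p → ℝ)
    (hsX : ∀ m l, DDX m l = DDX l m) (hsY : ∀ m l, DDY m l = DDY l m)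
    (hsW : ∀ m l, DDW m l = DDW l m) :
    ((∑ j, ∑ l, X j * F l j * DBf c F DF k Y W DY DW DDY DDW l)
      - (∑ j, ∑ l, Bf c F Y W DY DW j * F l j * DX l k)
      - ∑ i, ∑ j, c i j k * X i * Bf c F Y W DY DW j)
    + ((∑ j, ∑ l, Y j * F l j * DBf c F DF k W X DW DX DDW DDX l)
      - (∑ j, ∑ l, Bf c F W X DW DX j * F l j * DY l k)
      - ∑ i, ∑ j, c i j k * Y i * Bf c F W X DW DX j)
    + ((∑ j, ∑ l, W j * F l j * DBf c F DF k X Y DX DY DDX DDY l)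
      - (∑ j, ∑ l, Bf c F X Y DX DY j * F l j * DW l k)
      - ∑ i, ∑ j, c i j k * W i * Bf c F X Y DX DY j) = 0 := by
  rw [expandT c F DF k X Y W DX DY DW DDY DDW,
    expandT c F DF k Y W X DY DW DX DDW DDX,
    expandT c F DF k W X Y DW DX DY DDX DDY]
  linarith [S1_eq_S6 F k X DY DW, S1_eq_S6 F k X DW DY, S1_eq_S6 F k Y DW DX,
    S1_eq_S6 F k Y DX DW, S1_eq_S6 F k W DX DY, S1_eq_S6 F k W DY DX,
    S3_symm F X Y DDW hsW, S3_symm F Y W DDX hsX, S3_symm F W X DDY hsY,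
    S2S7 c F DF k compat X Y DW, S2S7 c F DF k compat Y W DX, S2S7 c F DF k compat W X DY,
    S4_eq_neg_S8 c F k hskew Y DW X, S4_eq_neg_S8 c F k hskew W DX Y,
    S4_eq_neg_S8 c F k hskew X DY W,
    S5_eq_S8 c F k X Y DW, S5_eq_S8 c F k Y W DX, S5_eq_S8 c F k W X DY,
    S9cyc c k hskew hjac X Y W]

end SBKey


/-! ### Derivative of the second bracket -/

lemma pd_bracket {p r : ℕ} (c : Fin r → Fin r → Fin r → ℝ)
    (Φ : (Fin p → ℝ) → Matrix (Fin p) (Fin r) ℝ)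
    (hΦ : ∀ m j, ContDiff ℝ (⊤ : ℕ∞) fun z => Φ z m j)
    (y w : (Fin p → ℝ) → Fin r → ℝ) (hy : ∀ k, ContDiff ℝ (⊤ : ℕ∞) fun z => y z k)
    (hw : ∀ k, ContDiff ℝ (⊤ : ℕ∞) fun z => w z k) (k : Fin r) (m : Fin p) (z : Fin p → ℝ) :
    pd m (fun z => secondBracket c Φ y w z k) z
      = SBKey.DBf c (fun l a => Φ z l a) (fun m' l a => pd m' (fun z' => Φ z' l a) z) k
          (y z) (w z) (fun m' a => pd m' (fun z' => y z' a) z)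
          (fun m' a => pd m' (fun z' => w z' a) z)
          (fun m' l => pd m' (fun z' => pd l (fun z'' => y z'' k) z') z)
          (fun m' l => pd m' (fun z' => pd l (fun z'' => w z'' k) z') z) m := by
  have hone : ∀ (u v : (Fin p → ℝ) → Fin r → ℝ),
      (∀ k', ContDiff ℝ (⊤ : ℕ∞) fun z => u z k') → (∀ k', ContDiff ℝ (⊤ : ℕ∞) fun z => v z k') →
      ∀ (a : Fin r) (l : Fin p),
        ContDiff ℝ (⊤ : ℕ∞) (fun z => u z a * Φ z l a * pd l (fun z' => v z' k) z) :=
    fun u v hu hv a l => ((hu a).mul (hΦ l a)).mul (pd_smooth (hv k) l)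
  have hin : ∀ (u v : (Fin p → ℝ) → Fin r → ℝ),
      (∀ k', ContDiff ℝ (⊤ : ℕ∞) fun z => u z k') → (∀ k', ContDiff ℝ (⊤ : ℕ∞) fun z => v z k') →
      ∀ a : Fin r,
        ContDiff ℝ (⊤ : ℕ∞) (fun z => ∑ l, u z a * Φ z l a * pd l (fun z' => v z' k) z) :=
    fun u v hu hv a => ContDiff.sum fun l _ => hone u v hu hv a l
  have hsum1 : ContDiff ℝ (⊤ : ℕ∞)
      (fun z => ∑ a, ∑ l, y z a * Φ z l a * pd l (fun z' => w z' k) z) :=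
    ContDiff.sum fun a _ => hin y w hy hw a
  have hsum2 : ContDiff ℝ (⊤ : ℕ∞)
      (fun z => ∑ a, ∑ l, w z a * Φ z l a * pd l (fun z' => y z' k) z) :=
    ContDiff.sum fun a _ => hin w y hw hy a
  have hcin : ∀ a : Fin r, ContDiff ℝ (⊤ : ℕ∞) (fun z => ∑ b, c a b k * y z a * w z b) :=
    fun a => ContDiff.sum fun b _ => (contDiff_const.mul (hy a)).mul (hw b)
  have hsum3 : ContDiff ℝ (⊤ : ℕ∞) (fun z => ∑ a, ∑ b, c a b k * y z a * w z b) :=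
    ContDiff.sum fun a _ => hcin a
  have dA : DifferentiableAt ℝ
      (fun z => ∑ a, ∑ l, y z a * Φ z l a * pd l (fun z' => w z' k) z) z :=
    (hsum1.differentiable (by simp)).differentiableAt
  have dB : DifferentiableAt ℝ
      (fun z => ∑ a, ∑ l, w z a * Φ z l a * pd l (fun z' => y z' k) z) z :=
    (hsum2.differentiable (by simp)).differentiableAt
  have dC : DifferentiableAt ℝ (fun z => ∑ a, ∑ b, c a b k * y z a * w z b) z :=
    (hsum3.differentiable (by simp)).differentiableAt
  have hAB : ∀ (u v : (Fin p → ℝ) → Fin r → ℝ)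
      (hu : ∀ k', ContDiff ℝ (⊤ : ℕ∞) fun z => u z k') (hv : ∀ k', ContDiff ℝ (⊤ : ℕ∞) fun z => v z k'),
      pd m (fun z => ∑ a, ∑ l, u z a * Φ z l a * pd l (fun z' => v z' k) z) z
        = ∑ a, ∑ l, (pd m (fun z' => u z' a) z * Φ z l a * pd l (fun z' => v z' k) z
            + u z a * pd m (fun z' => Φ z' l a) z * pd l (fun z' => v z' k) z
            + u z a * Φ z l a * pd m (fun z' => pd l (fun z'' => v z'' k) z') z) := by
    intro u v hu hv
    rw [pd_sum (fun a => ((hin u v hu hv a).differentiable (by simp)).differentiableAt) m]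
    refine Finset.sum_congr rfl fun a _ => ?_
    rw [pd_sum (fun l => ((hone u v hu hv a l).differentiable (by simp)).differentiableAt) m]
    refine Finset.sum_congr rfl fun l _ => ?_
    exact pd_mul3 ((hu a).differentiable (by simp)).differentiableAt
      (((hΦ l a).differentiable (by simp)).differentiableAt)
      (((pd_smooth (hv k) l).differentiable (by simp)).differentiableAt) m
  have hC : pd m (fun z => ∑ a, ∑ b, c a b k * y z a * w z b) z
      = ∑ a, ∑ b, (c a b k * pd m (fun z' => y z' a) z * w z b
          + c a b k * y z a * pd m (fun z' => w z' b) z) := by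
    rw [pd_sum (fun a => ((hcin a).differentiable (by simp)).differentiableAt) m]
    refine Finset.sum_congr rfl fun a _ => ?_
    rw [pd_sum (fun b =>
      (((contDiff_const.mul (hy a)).mul (hw b)).differentiable (by simp)).differentiableAt) m]
    refine Finset.sum_congr rfl fun b _ => ?_
    exact pd_const_mul3 (c a b k) ((hy a).differentiable (by simp)).differentiableAt
      ((hw b).differentiable (by simp)).differentiableAt m
  have e0 : pd m (fun z => secondBracket c Φ y w z k) z
      = pd m (fun z =>
          (∑ a, ∑ l, y z a * Φ z l a * pd l (fun z' => w z' k) z)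
          - (∑ a, ∑ l, w z a * Φ z l a * pd l (fun z' => y z' k) z)
          - ∑ a, ∑ b, c a b k * y z a * w z b) z := rfl
  rw [e0, pd_sub (dA.fun_sub dB) dC m, pd_sub dA dB m, hAB y w hy hw, hAB w y hw hy, hC]
  rfl

/-- The second bracket defined by Lie structure constants `c` and a
compatible smooth matrix of infinitesimals `Φ` satisfies the Jacobi identity. -/
theorem secondBracket_jacobi {p r : ℕ} (c : Fin r → Fin r → Fin r → ℝ)
    (hskew : ∀ i j k, c j i k = -(c i j k))
    (hjac : ∀ i j l m, ∑ k, (c i j k * c k l m + c j l k * c k i m + c l i k * c k j m) = 0)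
    (Φ : (Fin p → ℝ) → Matrix (Fin p) (Fin r) ℝ)
    (hΦsmooth : ∀ m j, ContDiff ℝ (⊤ : ℕ∞) fun z => Φ z m j)
    (hΦcompat : ∀ (i j : Fin r) (m : Fin p) (z : Fin p → ℝ),
      ∑ l, (Φ z l i * pd l (fun w => Φ w m j) z - Φ z l j * pd l (fun w => Φ w m i) z)
        = -∑ k, c i j k * Φ z m k)
    (x y w : (Fin p → ℝ) → (Fin r → ℝ))
    (hx : ∀ k, ContDiff ℝ (⊤ : ℕ∞) fun z => x z k)
    (hy : ∀ k, ContDiff ℝ (⊤ : ℕ∞) fun z => y z k)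
    (hw : ∀ k, ContDiff ℝ (⊤ : ℕ∞) fun z => w z k) :
    ∀ z : Fin p → ℝ,
      secondBracket c Φ x (secondBracket c Φ y w) z
      + secondBracket c Φ y (secondBracket c Φ w x) z
      + secondBracket c Φ w (secondBracket c Φ x y) z = 0 := by
  intro z
  funext k
  simp only [Pi.add_apply, Pi.zero_apply]
  set F : Fin p → Fin r → ℝ := fun l a => Φ z l a with hF
  set DF : Fin p → Fin p → Fin r → ℝ := fun m' l a => pd m' (fun z' => Φ z' l a) z with hDF
  set DX : Fin p → Fin r → ℝ := fun m' a => pd m' (fun z' => x z' a) z with hDX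
  set DY : Fin p → Fin r → ℝ := fun m' a => pd m' (fun z' => y z' a) z with hDY
  set DW : Fin p → Fin r → ℝ := fun m' a => pd m' (fun z' => w z' a) z with hDW
  set DDX : Fin p → Fin p → ℝ :=
    fun m' l => pd m' (fun z' => pd l (fun z'' => x z'' k) z') z with hDDX
  set DDY : Fin p → Fin p → ℝ :=
    fun m' l => pd m' (fun z' => pd l (fun z'' => y z'' k) z') z with hDDY
  set DDW : Fin p → Fin p → ℝ :=
    fun m' l => pd m' (fun z' => pd l (fun z'' => w z'' k) z') z with hDDW
  have hpd1 : ∀ l, pd l (fun z' => secondBracket c Φ y w z' k) z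
      = SBKey.DBf c F DF k (y z) (w z) DY DW DDY DDW l :=
    fun l => pd_bracket c Φ hΦsmooth y w hy hw k l z
  have hpd2 : ∀ l, pd l (fun z' => secondBracket c Φ w x z' k) z
      = SBKey.DBf c F DF k (w z) (x z) DW DX DDW DDX l :=
    fun l => pd_bracket c Φ hΦsmooth w x hw hx k l z
  have hpd3 : ∀ l, pd l (fun z' => secondBracket c Φ x y z' k) z
      = SBKey.DBf c F DF k (x z) (y z) DX DY DDX DDY l :=
    fun l => pd_bracket c Φ hΦsmooth x y hx hy k l z
  have hb1 : ∀ j, secondBracket c Φ y w z j = SBKey.Bf c F (y z) (w z) DY DW j :=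
    fun j => rfl
  have hb2 : ∀ j, secondBracket c Φ w x z j = SBKey.Bf c F (w z) (x z) DW DX j :=
    fun j => rfl
  have hb3 : ∀ j, secondBracket c Φ x y z j = SBKey.Bf c F (x z) (y z) DX DY j :=
    fun j => rfl
  have e1 : secondBracket c Φ x (secondBracket c Φ y w) z k
      = (∑ j, ∑ l, x z j * Φ z l j * pd l (fun z' => secondBracket c Φ y w z' k) z)
        - (∑ j, ∑ l, secondBracket c Φ y w z j * Φ z l j * pd l (fun z' => x z' k) z)
        - ∑ i, ∑ j, c i j k * x z i * secondBracket c Φ y w z j := rfl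
  have e2 : secondBracket c Φ y (secondBracket c Φ w x) z k
      = (∑ j, ∑ l, y z j * Φ z l j * pd l (fun z' => secondBracket c Φ w x z' k) z)
        - (∑ j, ∑ l, secondBracket c Φ w x z j * Φ z l j * pd l (fun z' => y z' k) z)
        - ∑ i, ∑ j, c i j k * y z i * secondBracket c Φ w x z j := rfl
  have e3 : secondBracket c Φ w (secondBracket c Φ x y) z k
      = (∑ j, ∑ l, w z j * Φ z l j * pd l (fun z' => secondBracket c Φ x y z' k) z)
        - (∑ j, ∑ l, secondBracket c Φ x y z j * Φ z l j * pd l (fun z' => w z' k) z)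
        - ∑ i, ∑ j, c i j k * w z i * secondBracket c Φ x y z j := rfl
  rw [e1, e2, e3]
  simp only [hpd1, hpd2, hpd3, hb1, hb2, hb3]
  exact SBKey.key c F DF k hskew hjac (fun i j m => hΦcompat i j m z)
    (x z) (y z) (w z) DX DY DW DDX DDY DDW
    (fun m l => pd_symm (hx k) m l z) (fun m l => pd_symm (hy k) m l z)
    (fun m l => pd_symm (hw k) m l z)
end

section
/- Let n ∈ ℕ and let x, y, z, E : ℝ → Matrix (Fin n) (Fin n) ℝ be continuously differentiable, with x(0) = x(2π), y(0) = y(2π), z(0) = z(2π). Define the second bracket pointwise by ⟦y, z⟧(s) = (trace (y s * E s)) • (deriv z s) − (trace (z s * E s)) • (deriv y s) − (y s * z s − z s * y s), and similarly for the other pairs. Then the 2-cocycle identity holds: ∫_0^{2π} [ trace (⟦y, z⟧(s) * deriv x s) + trace (⟦z, x⟧(s) * deriv y s) + trace (⟦x, y⟧(s) * deriv z s) ] ds = 0. (That is, β(u, v) = ∫_0^{2π} trace (u(s) * deriv v s) ds, which is the standard cocycle for the pointwise bracket on loop algebras, is also a cocycle for the second bracket ⟦·,·⟧.) -/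
open Matrix

/-- Entrywise derivative of a matrix-valued function of a real variable. -/
noncomputable def matDeriv {n : ℕ} (f : ℝ → Matrix (Fin n) (Fin n) ℝ) (s : ℝ) :
    Matrix (Fin n) (Fin n) ℝ :=
  Matrix.of fun i j => deriv (fun t => f t i j) s

/-- The second bracket associated to a one-dimensional group action with infinitesimal
character `s ↦ tr(· E(s))`:
`⟦y, z⟧(s) = tr(y(s)E(s)) z'(s) − tr(z(s)E(s)) y'(s) − [y(s), z(s)]`. -/
noncomputable def secondBr {n : ℕ} (E y z : ℝ → Matrix (Fin n) (Fin n) ℝ) (s : ℝ) :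
    Matrix (Fin n) (Fin n) ℝ :=
  (Matrix.trace (y s * E s)) • matDeriv z s - (Matrix.trace (z s * E s)) • matDeriv y s
    - (y s * z s - z s * y s)

lemma trace3_expand {n : ℕ} (A B C : Matrix (Fin n) (Fin n) ℝ) :
    Matrix.trace (A * B * C) = ∑ i, ∑ k, ∑ j, A i j * B j k * C k i := by
  simp [Matrix.trace, Matrix.diag, Matrix.mul_apply, Finset.sum_mul]

lemma matDeriv_apply {n : ℕ} (f : ℝ → Matrix (Fin n) (Fin n) ℝ) (s : ℝ) (i j : Fin n) :
    matDeriv f s i j = deriv (fun t => f t i j) s := rfl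

lemma hasDerivAt_trace3 {n : ℕ} (a b c : ℝ → Matrix (Fin n) (Fin n) ℝ)
    (ha : ∀ i j, ContDiff ℝ 1 fun t => a t i j)
    (hb : ∀ i j, ContDiff ℝ 1 fun t => b t i j)
    (hc : ∀ i j, ContDiff ℝ 1 fun t => c t i j) (s : ℝ) :
    HasDerivAt (fun t => Matrix.trace (a t * b t * c t))
      (Matrix.trace (matDeriv a s * b s * c s) + Matrix.trace (a s * matDeriv b s * c s)
        + Matrix.trace (a s * b s * matDeriv c s)) s := by
  have ha' : ∀ i j, HasDerivAt (fun t => a t i j) (matDeriv a s i j) s := fun i j =>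
    ((ha i j).differentiable one_ne_zero).differentiableAt.hasDerivAt
  have hb' : ∀ i j, HasDerivAt (fun t => b t i j) (matDeriv b s i j) s := fun i j =>
    ((hb i j).differentiable one_ne_zero).differentiableAt.hasDerivAt
  have hc' : ∀ i j, HasDerivAt (fun t => c t i j) (matDeriv c s i j) s := fun i j =>
    ((hc i j).differentiable one_ne_zero).differentiableAt.hasDerivAt
  have H : HasDerivAt (fun t => ∑ i, ∑ k, ∑ j, a t i j * b t j k * c t k i)
      (∑ i : Fin n, ∑ k : Fin n, ∑ j : Fin n,
        (matDeriv a s i j * b s j k * c s k i + a s i j * matDeriv b s j k * c s k i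
          + a s i j * b s j k * matDeriv c s k i)) s := by
    apply HasDerivAt.fun_sum; intro i _
    apply HasDerivAt.fun_sum; intro k _
    apply HasDerivAt.fun_sum; intro j _
    have h := ((ha' i j).fun_mul (hb' j k)).fun_mul (hc' k i)
    exact h.congr_deriv (by ring)
  have hfun : (fun t => Matrix.trace (a t * b t * c t))
      = fun t => ∑ i, ∑ k, ∑ j, a t i j * b t j k * c t k i := by
    funext t; exact trace3_expand _ _ _
  rw [hfun]
  convert H using 1
  simp [trace3_expand, Finset.sum_add_distrib]

lemma cont_trace3 {n : ℕ} (a b c : ℝ → Matrix (Fin n) (Fin n) ℝ)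
    (ha : ∀ i j, Continuous fun t => a t i j)
    (hb : ∀ i j, Continuous fun t => b t i j)
    (hc : ∀ i j, Continuous fun t => c t i j) :
    Continuous fun t => Matrix.trace (a t * b t * c t) := by
  have hfun : (fun t => Matrix.trace (a t * b t * c t))
      = fun t => ∑ i, ∑ k, ∑ j, a t i j * b t j k * c t k i := by
    funext t; exact trace3_expand _ _ _
  rw [hfun]
  apply continuous_finset_sum; intro i _
  apply continuous_finset_sum; intro k _
  apply continuous_finset_sum; intro j _
  exact ((ha i j).mul (hb j k)).mul (hc k i)

/-- The standard cocycle `β(u, v) = ∫₀^{2π} tr(u v') ds` of the loop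
algebra is also a 2-cocycle for the second bracket `⟦·,·⟧`. -/
theorem beta_cocycle_secondBracket {n : ℕ} (x y z E : ℝ → Matrix (Fin n) (Fin n) ℝ)
    (hx : ∀ i j, ContDiff ℝ 1 fun t => x t i j)
    (hy : ∀ i j, ContDiff ℝ 1 fun t => y t i j)
    (hz : ∀ i j, ContDiff ℝ 1 fun t => z t i j)
    (hE : ∀ i j, ContDiff ℝ 1 fun t => E t i j)
    (hxper : x 0 = x (2 * Real.pi))
    (hyper : y 0 = y (2 * Real.pi))
    (hzper : z 0 = z (2 * Real.pi)) :
    ∫ s in (0 : ℝ)..(2 * Real.pi),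
      (Matrix.trace (secondBr E y z s * matDeriv x s)
        + Matrix.trace (secondBr E z x s * matDeriv y s)
        + Matrix.trace (secondBr E x y s * matDeriv z s)) = 0 := by
  set G : ℝ → ℝ := fun s =>
    (Matrix.trace (matDeriv x s * z s * y s) + Matrix.trace (x s * matDeriv z s * y s)
        + Matrix.trace (x s * z s * matDeriv y s))
      - (Matrix.trace (matDeriv x s * y s * z s) + Matrix.trace (x s * matDeriv y s * z s)
        + Matrix.trace (x s * y s * matDeriv z s)) with hG
  set F : ℝ → ℝ := fun s =>
    Matrix.trace (x s * z s * y s) - Matrix.trace (x s * y s * z s) with hF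
  have hFderiv : ∀ s : ℝ, HasDerivAt F (G s) s := fun s =>
    (hasDerivAt_trace3 x z y hx hz hy s).sub (hasDerivAt_trace3 x y z hx hy hz s)
  -- pointwise identity
  have hpt : ∀ s : ℝ,
      Matrix.trace (secondBr E y z s * matDeriv x s)
        + Matrix.trace (secondBr E z x s * matDeriv y s)
        + Matrix.trace (secondBr E x y s * matDeriv z s) = G s := by
    intro s
    set X' := matDeriv x s
    set Y' := matDeriv y s
    set Z' := matDeriv z s
    have e1 : Matrix.trace (Z' * X') = Matrix.trace (X' * Z') := Matrix.trace_mul_comm _ _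
    have e2 : Matrix.trace (Y' * X') = Matrix.trace (X' * Y') := Matrix.trace_mul_comm _ _
    have e3 : Matrix.trace (Z' * Y') = Matrix.trace (Y' * Z') := Matrix.trace_mul_comm _ _
    have e4 : Matrix.trace (z s * y s * X') = Matrix.trace (X' * z s * y s) := by
      rw [Matrix.trace_mul_comm, Matrix.mul_assoc]
    have e5 : Matrix.trace (y s * z s * X') = Matrix.trace (X' * y s * z s) := by
      rw [Matrix.trace_mul_comm, Matrix.mul_assoc]
    have e6 : Matrix.trace (z s * x s * Y') = Matrix.trace (x s * Y' * z s) := by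
      rw [Matrix.mul_assoc, Matrix.trace_mul_comm]
    have e7 : Matrix.trace (y s * x s * Z') = Matrix.trace (x s * Z' * y s) := by
      rw [Matrix.mul_assoc, Matrix.trace_mul_comm]
    simp only [hG, secondBr, Matrix.sub_mul, Matrix.smul_mul, Matrix.trace_sub,
      Matrix.trace_smul, smul_eq_mul]
    linear_combination (Matrix.trace (y s * E s)) * e1 - (Matrix.trace (z s * E s)) * e2
      - (Matrix.trace (x s * E s)) * e3 + e4 - e5 - e6 + e7
  have hcont : Continuous G := by
    have hx' : ∀ i j, Continuous fun t => x t i j := fun i j => (hx i j).continuous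
    have hy' : ∀ i j, Continuous fun t => y t i j := fun i j => (hy i j).continuous
    have hz' : ∀ i j, Continuous fun t => z t i j := fun i j => (hz i j).continuous
    have hdx : ∀ i j, Continuous fun t => matDeriv x t i j := fun i j =>
      (hx i j).continuous_deriv le_rfl
    have hdy : ∀ i j, Continuous fun t => matDeriv y t i j := fun i j =>
      (hy i j).continuous_deriv le_rfl
    have hdz : ∀ i j, Continuous fun t => matDeriv z t i j := fun i j =>
      (hz i j).continuous_deriv le_rfl
    exact (((cont_trace3 _ _ _ hdx hz' hy').add (cont_trace3 _ _ _ hx' hdz hy')).add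
      (cont_trace3 _ _ _ hx' hz' hdy)).sub
      (((cont_trace3 _ _ _ hdx hy' hz').add (cont_trace3 _ _ _ hx' hdy hz')).add
      (cont_trace3 _ _ _ hx' hy' hdz))
  have hcongr : (fun s =>
      Matrix.trace (secondBr E y z s * matDeriv x s)
        + Matrix.trace (secondBr E z x s * matDeriv y s)
        + Matrix.trace (secondBr E x y s * matDeriv z s)) = G := funext hpt
  calc ∫ s in (0 : ℝ)..(2 * Real.pi),
      (Matrix.trace (secondBr E y z s * matDeriv x s)
        + Matrix.trace (secondBr E z x s * matDeriv y s)
        + Matrix.trace (secondBr E x y s * matDeriv z s))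
      = ∫ s in (0 : ℝ)..(2 * Real.pi), G s := by rw [hcongr]
    _ = F (2 * Real.pi) - F 0 :=
        intervalIntegral.integral_eq_sub_of_hasDerivAt (fun t _ => hFderiv t) (hcont.intervalIntegrable _ _)
    _ = 0 := by simp [hF, hxper, hyper, hzper]
end
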